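/- arXiv:1609.00665 — 3 statements merged into one kernel-verified Lean document; each statement's English description precedes it below -/
import Mathlib

section
/- For each n ≥ 1 and V ∈ ℝ with V² ≠ n, the two vectors Φₙ⁽±⁾ = (eₙ, αₙ⁽±⁾ eₙ₋₁) in ℂ² ⊗ ℓ² (unnormalized), where αₙ⁽±⁾ = ∓i(√(n−V²) ∓ iV)/√n, are eigenvectors of the operator H(V) = [[iV, iA†],[−iA, −iV]] with eigenvalues ±√(n−V²), and they are linearly independent. -/
open Complex

/-!
On the plane spanned by (eₙ, 0) and (0, eₙ₋₁), H(V) acts as the 2 × 2 matrix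
[[iV, i√n], [−i√n, −iV]], whose eigenvalues μ satisfy μ² = n − V². The eigenvector for μ is
(eₙ, α eₙ₋₁) with α = −i(μ − iV)/√n, which is injective in μ; so the eigenvectors for
μ = ±√(n − V²) are linearly independent as soon as √(n − V²) ≠ 0, i.e. V² ≠ n.
-/

/-- The annihilation operator on sequences: (A c) n = √(n+1) · c (n+1). -/
noncomputable def annOp (c : ℕ → ℂ) : ℕ → ℂ :=
  fun n => (Real.sqrt (n + 1) : ℂ) * c (n + 1)

/-- The creation operator on sequences: (A† c) n = √n · c (n−1), (A† c) 0 = 0. -/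
noncomputable def creOp (c : ℕ → ℂ) : ℕ → ℂ :=
  fun n => if n = 0 then 0 else (Real.sqrt n : ℂ) * c (n - 1)

/-- The operator H(V) = [[iV, iA†],[−iA, −iV]] on ℓ² ⊕ ℓ² (units 2v_F/ξ = 1). -/
noncomputable def Hgraphene (V : ℝ) (f : (ℕ → ℂ) × (ℕ → ℂ)) : (ℕ → ℂ) × (ℕ → ℂ) :=
  (fun m => Complex.I * V * f.1 m + Complex.I * creOp f.2 m,
   fun m => -Complex.I * annOp f.1 m - Complex.I * V * f.2 m)

/-- The basis vector e n. -/
noncomputable def eVec (n : ℕ) : ℕ → ℂ := fun m => if m = n then 1 else 0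

/-- Principal square root √(n − V²). -/
noncomputable def sqVal (n : ℕ) (V : ℝ) : ℂ := ((n : ℂ) - (V : ℂ) ^ 2) ^ ((1 : ℂ) / 2)

noncomputable def alphaP (n : ℕ) (V : ℝ) : ℂ :=
  -Complex.I * (sqVal n V - Complex.I * V) / (Real.sqrt n : ℂ)

noncomputable def alphaM (n : ℕ) (V : ℝ) : ℂ :=
  Complex.I * (sqVal n V + Complex.I * V) / (Real.sqrt n : ℂ)

theorem LinearIndependent.pair_prod_smul {K M N : Type*} [Field K] [AddCommGroup M] [Module K M]
    [AddCommGroup N] [Module K N] {x : M} {y : N} (hx : x ≠ 0) (hy : y ≠ 0) {a b : K}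
    (hab : a ≠ b) : LinearIndependent K ![(x, a • y), (x, b • y)] := by
  rw [LinearIndependent.pair_iff]
  intro s t hst
  have hfst : (s + t) • x = 0 := by simpa [add_smul] using congrArg Prod.fst hst
  have hsnd : (s * a + t * b) • y = 0 := by
    simpa [add_smul, mul_smul] using congrArg Prod.snd hst
  have ht : t = -s := by linear_combination (smul_eq_zero.mp hfst).resolve_right hx
  have hs : s * (a - b) = 0 := by
    linear_combination (smul_eq_zero.mp hsnd).resolve_right hy - b * ht
  have hs0 : s = 0 := (mul_eq_zero.mp hs).resolve_right (sub_ne_zero.mpr hab)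
  exact ⟨hs0, by rw [ht, hs0, neg_zero]⟩

theorem eVec_ne_zero (n : ℕ) : eVec n ≠ 0 := fun h => by
  simpa [eVec] using congrFun h n

theorem creOp_smul_eVec (c : ℂ) (k : ℕ) :
    creOp (c • eVec k) = (c * Real.sqrt (k + 1)) • eVec (k + 1) := by
  funext m
  rcases m with _ | m
  · simp [creOp, eVec]
  · by_cases hm : m = k
    · subst hm; simp [creOp, eVec, mul_comm]
    · simp [creOp, eVec, hm]

theorem annOp_eVec_succ (k : ℕ) : annOp (eVec (k + 1)) = (Real.sqrt (k + 1) : ℂ) • eVec k := by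
  funext m
  by_cases hm : m = k
  · subst hm; simp [annOp, eVec]
  · simp [annOp, eVec, hm]

theorem Hgraphene_eVec_pair (V : ℝ) (α : ℂ) (k : ℕ) :
    Hgraphene V (eVec (k + 1), α • eVec k) =
      ((I * V + I * α * Real.sqrt (k + 1)) • eVec (k + 1),
        (-I * Real.sqrt (k + 1) - I * V * α) • eVec k) := by
  simp only [Hgraphene, creOp_smul_eVec, annOp_eVec_succ]
  ext m <;> simp only [Pi.smul_apply, smul_eq_mul] <;> ring

theorem sqVal_sq (n : ℕ) (V : ℝ) : sqVal n V ^ 2 = n - (V : ℂ) ^ 2 := by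
  rw [sqVal, one_div]
  exact Complex.cpow_ofNat_inv_pow _ 2

theorem sqVal_ne_zero {n : ℕ} {V : ℝ} (hV : V ^ 2 ≠ n) : sqVal n V ≠ 0 := fun h => hV <| by
  have hsq := sqVal_sq n V
  rw [h] at hsq
  exact_mod_cast (by linear_combination hsq : (V : ℂ) ^ 2 = n)

noncomputable def eigenCoeff (n : ℕ) (V : ℝ) (μ : ℂ) : ℂ := -I * (μ - I * V) / (Real.sqrt n : ℂ)

theorem alphaP_eq_eigenCoeff (n : ℕ) (V : ℝ) : alphaP n V = eigenCoeff n V (sqVal n V) := rfl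

theorem alphaM_eq_eigenCoeff (n : ℕ) (V : ℝ) : alphaM n V = eigenCoeff n V (-sqVal n V) := by
  simp only [alphaM, eigenCoeff]
  ring

theorem eigenCoeff_injective {n : ℕ} (hn : n ≠ 0) (V : ℝ) : Function.Injective (eigenCoeff n V) := by
  intro μ ν h
  have hr : (Real.sqrt n : ℂ) ≠ 0 := by simpa using hn
  simp only [eigenCoeff] at h
  field_simp at h
  linear_combination -h

theorem Hgraphene_eigenvector (V : ℝ) (k : ℕ) {μ : ℂ} (hμ : μ ^ 2 = (k + 1 : ℕ) - (V : ℂ) ^ 2) :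
    Hgraphene V (eVec (k + 1), eigenCoeff (k + 1) V μ • eVec k) =
      μ • (eVec (k + 1), eigenCoeff (k + 1) V μ • eVec k) := by
  rw [Hgraphene_eVec_pair, Prod.smul_mk, smul_smul, eigenCoeff]
  push_cast at hμ ⊢
  set r : ℂ := (Real.sqrt (k + 1) : ℂ)
  have hr : r ^ 2 = k + 1 := by
    simp only [r, ← ofReal_pow, Real.sq_sqrt (by positivity : (0:ℝ) ≤ k + 1)]; push_cast; ring
  have hr0 : r ≠ 0 := ofReal_ne_zero.mpr (by positivity)
  congr 2
  · field_simp; linear_combination (I * V - μ) * I_sq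
  · field_simp; linear_combination hμ - hr - V ^ 2 * I_sq

/-- Φₙ⁽±⁾ = (eₙ, αₙ⁽±⁾ eₙ₋₁) are eigenvectors of H(V) with eigenvalues ±√(n−V²),
and they are linearly independent. -/
theorem stmt_8 (n : ℕ) (hn : 1 ≤ n) (V : ℝ) (hV : V ^ 2 ≠ (n : ℝ)) :
    Hgraphene V (eVec n, alphaP n V • eVec (n - 1)) =
      sqVal n V • (eVec n, alphaP n V • eVec (n - 1)) ∧
    Hgraphene V (eVec n, alphaM n V • eVec (n - 1)) =
      (-sqVal n V) • (eVec n, alphaM n V • eVec (n - 1)) ∧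
    LinearIndependent ℂ
      ![(eVec n, alphaP n V • eVec (n - 1)), (eVec n, alphaM n V • eVec (n - 1))] := by
  obtain ⟨k, rfl⟩ : ∃ k, n = k + 1 := ⟨n - 1, by omega⟩
  rw [Nat.add_sub_cancel, alphaP_eq_eigenCoeff, alphaM_eq_eigenCoeff]
  refine ⟨Hgraphene_eigenvector V k (sqVal_sq _ _),
    Hgraphene_eigenvector V k (by rw [neg_sq, sqVal_sq]), ?_⟩
  exact .pair_prod_smul (eVec_ne_zero _) (eVec_ne_zero _)
    ((eigenCoeff_injective k.succ_ne_zero V).ne (self_ne_neg.mpr (sqVal_ne_zero hV)))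
end

section
/- For n < V² (PT-broken regime, √(n−V²) = i√(V²−n) pure imaginary), one has 1 + conj(αₙ⁽±⁾)·βₙ⁽±⁾ = 0 while 1 + conj(αₙ⁽⁺⁾)·βₙ⁽⁻⁾ ≠ 0, i.e. the biorthogonality pairing of eigenvectors of H(V) and H(V)† is swapped compared with the PT-symmetric regime. -/
open Complex

/-- αₙ⁽⁺⁾ in the PT-broken regime, with √(n−V²) = i√(V²−n). -/
noncomputable def aP (n : ℕ) (V : ℝ) : ℂ :=
  -Complex.I * (Complex.I * (Real.sqrt (V ^ 2 - (n : ℝ)) : ℂ) - Complex.I * V)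
    / (Real.sqrt n : ℂ)

noncomputable def aM (n : ℕ) (V : ℝ) : ℂ :=
  Complex.I * (Complex.I * (Real.sqrt (V ^ 2 - (n : ℝ)) : ℂ) + Complex.I * V)
    / (Real.sqrt n : ℂ)

noncomputable def bP (n : ℕ) (V : ℝ) : ℂ :=
  -Complex.I * (Complex.I * (Real.sqrt (V ^ 2 - (n : ℝ)) : ℂ) + Complex.I * V)
    / (Real.sqrt n : ℂ)

noncomputable def bM (n : ℕ) (V : ℝ) : ℂ :=
  Complex.I * (Complex.I * (Real.sqrt (V ^ 2 - (n : ℝ)) : ℂ) - Complex.I * V)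
    / (Real.sqrt n : ℂ)

/-! With `s = √(V² - n)` and `t = √n`, so that `s² + t² = V²`, all four coefficients are real:
`αₙ⁽⁺⁾ = (s - V)/t`, `βₙ⁽⁺⁾ = (s + V)/t`, `αₙ⁽⁻⁾ = -βₙ⁽⁺⁾`, `βₙ⁽⁻⁾ = -αₙ⁽⁺⁾`.
Hence both diagonal pairings equal `(s² - V²)/t² = -1`, while the mixed one is `-((s - V)/t)²`,
which is `-1` only if `(s - V)² = t²`, forcing `s = V` and then `t = 0`. -/

lemma div_mul_div_eq_neg_one_of_sq_add_sq {s t V : ℝ} (ht : t ≠ 0) (h : s ^ 2 + t ^ 2 = V ^ 2) :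
    (s - V) / t * ((s + V) / t) = -1 := by
  field_simp
  linear_combination h

lemma sq_sub_div_ne_one_of_sq_add_sq {s t V : ℝ} (hs : s ≠ 0) (ht : t ≠ 0)
    (h : s ^ 2 + t ^ 2 = V ^ 2) : ((s - V) / t) ^ 2 ≠ 1 := by
  rw [div_pow, ne_eq, div_eq_one_iff_eq (pow_ne_zero 2 ht)]
  intro hst
  have hsV : s = V := by
    have : s * (s - V) = 0 := by linear_combination (hst + h) / 2
    exact sub_eq_zero.1 ((mul_eq_zero.1 this).resolve_left hs)
  exact ht (pow_eq_zero_iff two_ne_zero |>.1 (by linear_combination h - (s + V) * hsV))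

lemma aP_eq_ofReal (n : ℕ) (V : ℝ) :
    aP n V = ((Real.sqrt (V ^ 2 - n) - V) / Real.sqrt n : ℝ) := by
  simp only [aP]
  push_cast
  ring_nf
  simp only [I_sq]
  ring

lemma bP_eq_ofReal (n : ℕ) (V : ℝ) :
    bP n V = ((Real.sqrt (V ^ 2 - n) + V) / Real.sqrt n : ℝ) := by
  simp only [bP]
  push_cast
  ring_nf
  simp only [I_sq]
  ring

lemma aM_eq_neg_bP (n : ℕ) (V : ℝ) : aM n V = -bP n V := by
  simp only [aM, bP]
  ring

lemma bM_eq_neg_aP (n : ℕ) (V : ℝ) : bM n V = -aP n V := by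
  simp only [bM, aP]
  ring

lemma conj_aP (n : ℕ) (V : ℝ) : starRingEnd ℂ (aP n V) = aP n V := by
  rw [aP_eq_ofReal, conj_ofReal]

lemma conj_bP (n : ℕ) (V : ℝ) : starRingEnd ℂ (bP n V) = bP n V := by
  rw [bP_eq_ofReal, conj_ofReal]

/-- In the PT-broken regime n < V², 1 + conj(αₙ⁽±⁾)·βₙ⁽±⁾ = 0 while
1 + conj(αₙ⁽⁺⁾)·βₙ⁽⁻⁾ ≠ 0: the biorthogonality pairing is swapped. -/
theorem stmt_10 (n : ℕ) (hn : 1 ≤ n) (V : ℝ) (h : (n : ℝ) < V ^ 2) :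
    starRingEnd ℂ (aP n V) * bP n V = -1 ∧
    starRingEnd ℂ (aM n V) * bM n V = -1 ∧
    starRingEnd ℂ (aP n V) * bM n V ≠ -1 := by
  have hs : Real.sqrt (V ^ 2 - n) ≠ 0 := (Real.sqrt_pos.2 (by linarith)).ne'
  have ht : Real.sqrt n ≠ 0 := Real.sqrt_ne_zero'.2 (by exact_mod_cast hn)
  have hsum : Real.sqrt (V ^ 2 - n) ^ 2 + Real.sqrt n ^ 2 = V ^ 2 := by
    rw [Real.sq_sqrt (by linarith), Real.sq_sqrt n.cast_nonneg]
    ring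
  have hab : aP n V * bP n V = -1 := by
    rw [aP_eq_ofReal, bP_eq_ofReal]
    exact_mod_cast div_mul_div_eq_neg_one_of_sq_add_sq ht hsum
  refine ⟨?_, ?_, ?_⟩
  · rw [conj_aP, hab]
  · rw [aM_eq_neg_bP, bM_eq_neg_aP, map_neg, conj_bP, neg_mul_neg, mul_comm, hab]
  · rw [bM_eq_neg_aP, conj_aP, mul_neg, ne_eq, neg_inj, ← sq, aP_eq_ofReal]
    exact_mod_cast sq_sub_div_ne_one_of_sq_add_sq hs ht hsum
end

section
/- In the setting of a biorthogonal pair of bases (φₖ), (ψₖ) of ℂ^{N+1} with H φₖ = Eₖ φₖ, Eₖ real and distinct, the positive operators S_φ = Σ|φₖ⟩⟨φₖ| and S_ψ = Σ|ψₖ⟩⟨ψₖ| satisfy S_ψ = S_φ⁻¹ and the intertwining relations S_ψ H = H† S_ψ and S_φ H† = H S_φ. -/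
/-!
Biorthogonality gives `S_ψ φₗ = ψₗ` and `S_φ ψₗ = φₗ`, so `S_φ S_ψ` fixes the spanning family
`(φₗ)` and is the identity; in finite dimension a one-sided inverse is two-sided. Testing
`H† ψₖ` against the `φₗ` shows that `ψₖ` is an eigenvector of `H†` for the eigenvalue `conj Eₖ = Eₖ`.
For any family `(vₖ)` of eigenvectors of `T` with real eigenvalues, both `S_v T†` and `T S_v` send
`x` to `∑ cₖ ⟪vₖ, x⟫ vₖ`; applied to `(T, v) = (H, φ)` and `(H†, ψ)` this gives the intertwinings.
-/

open Submodule

variable {𝕜 E ι : Type*} [RCLike 𝕜] [NormedAddCommGroup E] [InnerProductSpace 𝕜 E]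

local notation "⟪" x ", " y "⟫" => inner 𝕜 x y

/-- `S_v = ∑ₖ |vₖ⟩⟨vₖ|`. -/
def frameOperator [Fintype ι] (v : ι → E) : E →ₗ[𝕜] E :=
  ∑ k, (innerₛₗ 𝕜 (v k)).smulRight (v k)

theorem frameOperator_apply [Fintype ι] (v : ι → E) (x : E) :
    frameOperator (𝕜 := 𝕜) v x = ∑ k, ⟪v k, x⟫ • v k := by
  simp [frameOperator, LinearMap.sum_apply]

theorem ext_inner_left_of_span_eq_top {v : ι → E} (hv : span 𝕜 (Set.range v) = ⊤) {x y : E}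
    (h : ∀ i, ⟪v i, x⟫ = ⟪v i, y⟫) : x = y := by
  have hxy : innerₛₗ 𝕜 x = innerₛₗ 𝕜 y := by
    refine LinearMap.ext_on hv ?_
    rintro _ ⟨i, rfl⟩
    simp only [innerₛₗ_apply_apply]
    rw [← inner_conj_symm, h, inner_conj_symm]
  exact ext_inner_right 𝕜 (LinearMap.congr_fun hxy)

section Biorthogonal

variable {v w : ι → E} [DecidableEq ι]

theorem inner_eq_ite_symm (hvw : ∀ k l, ⟪v k, w l⟫ = if k = l then 1 else 0) (k l : ι) :
    ⟪w k, v l⟫ = if k = l then 1 else 0 := by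
  rw [← inner_conj_symm, hvw]
  rcases eq_or_ne k l with rfl | hkl
  · simp
  · simp [hkl, hkl.symm]

theorem adjoint_apply_of_inner_eq_ite [FiniteDimensional 𝕜 E] (hv : span 𝕜 (Set.range v) = ⊤)
    (hvw : ∀ k l, ⟪v k, w l⟫ = if k = l then 1 else 0) {T : E →ₗ[𝕜] E} {μ : ι → 𝕜}
    (hT : ∀ k, T (v k) = μ k • v k) (k : ι) :
    LinearMap.adjoint T (w k) = (starRingEnd 𝕜) (μ k) • w k := by
  refine ext_inner_left_of_span_eq_top hv fun l => ?_
  rw [LinearMap.adjoint_inner_right, hT, inner_smul_left, inner_smul_right, hvw]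
  split_ifs with hlk
  · rw [hlk]
  · simp

variable [Fintype ι]

theorem frameOperator_apply_of_inner_eq_ite
    (hvw : ∀ k l, ⟪v k, w l⟫ = if k = l then 1 else 0) (l : ι) :
    frameOperator (𝕜 := 𝕜) v (w l) = v l := by
  simp [frameOperator_apply, hvw, ite_smul]

theorem frameOperator_comp_frameOperator_of_inner_eq_ite (hv : span 𝕜 (Set.range v) = ⊤)
    (hvw : ∀ k l, ⟪v k, w l⟫ = if k = l then 1 else 0) :
    frameOperator (𝕜 := 𝕜) v ∘ₗ frameOperator w = LinearMap.id := by
  refine LinearMap.ext_on hv ?_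
  rintro _ ⟨l, rfl⟩
  simp [frameOperator_apply_of_inner_eq_ite (inner_eq_ite_symm hvw),
    frameOperator_apply_of_inner_eq_ite hvw]

end Biorthogonal

theorem frameOperator_comp_adjoint [Fintype ι] [FiniteDimensional 𝕜 E] {v : ι → E}
    {T : E →ₗ[𝕜] E} {c : ι → ℝ} (hT : ∀ k, T (v k) = (c k : 𝕜) • v k) :
    frameOperator v ∘ₗ LinearMap.adjoint T = T ∘ₗ frameOperator v := by
  ext x
  simp only [LinearMap.comp_apply, frameOperator_apply, map_sum, map_smul, hT,
    LinearMap.adjoint_inner_right, inner_smul_left, RCLike.conj_ofReal, smul_smul, mul_comm]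

theorem stmt_18_general (N : ℕ)
    (H : EuclideanSpace ℂ (Fin (N + 1)) →ₗ[ℂ] EuclideanSpace ℂ (Fin (N + 1)))
    (E : Fin (N + 1) → ℝ)
    (φ ψ : Fin (N + 1) → EuclideanSpace ℂ (Fin (N + 1)))
    (hspan : Submodule.span ℂ (Set.range φ) = ⊤)
    (heig : ∀ k, H (φ k) = (E k : ℂ) • φ k)
    (hbi : ∀ k l, (inner ℂ (φ k) (ψ l) : ℂ) = if k = l then 1 else 0) :
    (∑ k, (innerₛₗ ℂ (φ k)).smulRight (φ k)) ∘ₗ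
        (∑ k, (innerₛₗ ℂ (ψ k)).smulRight (ψ k)) = LinearMap.id ∧
    (∑ k, (innerₛₗ ℂ (ψ k)).smulRight (ψ k)) ∘ₗ
        (∑ k, (innerₛₗ ℂ (φ k)).smulRight (φ k)) = LinearMap.id ∧
    (∑ k, (innerₛₗ ℂ (ψ k)).smulRight (ψ k)) ∘ₗ H =
      LinearMap.adjoint H ∘ₗ (∑ k, (innerₛₗ ℂ (ψ k)).smulRight (ψ k)) ∧
    (∑ k, (innerₛₗ ℂ (φ k)).smulRight (φ k)) ∘ₗ LinearMap.adjoint H =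
      H ∘ₗ (∑ k, (innerₛₗ ℂ (φ k)).smulRight (φ k)) := by
  have hSφSψ := frameOperator_comp_frameOperator_of_inner_eq_ite hspan hbi
  have hadj : ∀ k, LinearMap.adjoint H (ψ k) = (E k : ℂ) • ψ k := fun k => by
    rw [adjoint_apply_of_inner_eq_ite hspan hbi heig, Complex.conj_ofReal]
  have hSψH := frameOperator_comp_adjoint hadj
  rw [LinearMap.adjoint_adjoint] at hSψH
  exact ⟨hSφSψ, mul_eq_one_comm.mp hSφSψ, hSψH, frameOperator_comp_adjoint heig⟩

/-- In the biorthogonal setting, S_φ = Σ|φₖ⟩⟨φₖ| and S_ψ = Σ|ψₖ⟩⟨ψₖ| are mutually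
inverse and satisfy the intertwining relations S_ψ H = H† S_ψ and S_φ H† = H S_φ. -/
theorem stmt_18 (N : ℕ)
    (H : EuclideanSpace ℂ (Fin (N + 1)) →ₗ[ℂ] EuclideanSpace ℂ (Fin (N + 1)))
    (E : Fin (N + 1) → ℝ) (hE : Function.Injective E)
    (φ ψ : Fin (N + 1) → EuclideanSpace ℂ (Fin (N + 1)))
    (hspan : Submodule.span ℂ (Set.range φ) = ⊤)
    (heig : ∀ k, H (φ k) = (E k : ℂ) • φ k)
    (hbi : ∀ k l, (inner ℂ (φ k) (ψ l) : ℂ) = if k = l then 1 else 0) :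
    (∑ k, (innerₛₗ ℂ (φ k)).smulRight (φ k)) ∘ₗ
        (∑ k, (innerₛₗ ℂ (ψ k)).smulRight (ψ k)) = LinearMap.id ∧
    (∑ k, (innerₛₗ ℂ (ψ k)).smulRight (ψ k)) ∘ₗ
        (∑ k, (innerₛₗ ℂ (φ k)).smulRight (φ k)) = LinearMap.id ∧
    (∑ k, (innerₛₗ ℂ (ψ k)).smulRight (ψ k)) ∘ₗ H =
      LinearMap.adjoint H ∘ₗ (∑ k, (innerₛₗ ℂ (ψ k)).smulRight (ψ k)) ∧
    (∑ k, (innerₛₗ ℂ (φ k)).smulRight (φ k)) ∘ₗ LinearMap.adjoint H =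
      H ∘ₗ (∑ k, (innerₛₗ ℂ (φ k)).smulRight (φ k)) :=
  stmt_18_general N H E φ ψ hspan heig hbi
end
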